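/- For a two-qubit X-density matrix ρ, the partial transpose ρ^{T_A} has at most one negative eigenvalue, and the negativity equals −min[0, (ρ₂₂+ρ₃₃)/2 − √((ρ₂₂−ρ₃₃)²/4 + |ρ₁₄|²), (ρ₁₁+ρ₄₄)/2 − √((ρ₁₁−ρ₄₄)²/4 + |ρ₂₃|²)]. -/

import Mathlib

open Real Complex Matrix Polynomial
open scoped ComplexOrder

/-- Partial transpose over the first qubit: ((a,b),(c,d)) ↦ ρ (c,b) (a,d), with
Fin 4 ≃ Fin 2 × Fin 2 via i = 2a + b. -/
def ptA (ρ : Matrix (Fin 4) (Fin 4) ℂ) : Matrix (Fin 4) (Fin 4) ℂ :=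
  !![ρ 0 0, ρ 0 1, ρ 2 0, ρ 2 1;
     ρ 1 0, ρ 1 1, ρ 3 0, ρ 3 1;
     ρ 0 2, ρ 0 3, ρ 2 2, ρ 2 3;
     ρ 1 2, ρ 1 3, ρ 3 2, ρ 3 3]

lemma minor2 (M : Matrix (Fin 2) (Fin 2) ℂ) (h : M.PosSemidef) :
    ‖M 0 1‖ ^ 2 ≤ (M 0 0).re * (M 1 1).re := by
  have hdetC : (0:ℂ) ≤ det M := by
    rw [h.1.det_eq_prod_eigenvalues]
    apply Finset.prod_nonneg
    intro i _
    exact RCLike.ofReal_nonneg.mpr (h.eigenvalues_nonneg i)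
  have hdet : (0:ℝ) ≤ (det M).re := (Complex.le_def.mp hdetC).1
  have h10 : M 1 0 = starRingEnd ℂ (M 0 1) := (h.1.apply 1 0).symm
  have h00 : M 0 0 = ((M 0 0).re : ℂ) := (h.1.coe_re_apply_self 0).symm
  have h11 : M 1 1 = ((M 1 1).re : ℂ) := (h.1.coe_re_apply_self 1).symm
  rw [Matrix.det_fin_two, h10, h00, h11, Complex.mul_conj'] at hdet
  simp only [Complex.sub_re, Complex.mul_re, Complex.ofReal_re, Complex.ofReal_im,
    ← Complex.ofReal_pow] at hdet
  nlinarith [hdet]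

lemma psd_diag_re_nonneg {n : ℕ} (M : Matrix (Fin n) (Fin n) ℂ) (h : M.PosSemidef)
    (i : Fin n) : 0 ≤ (M i i).re := by
  have h1 := h.diag_nonneg (i := i)
  have h2 := (Complex.le_def.mp h1).1
  simpa [dotProduct, Matrix.mulVec, Pi.single_apply, mul_ite, ite_mul] using h2

lemma charpoly4 (a b c d p q r s : ℂ) :
    (!![a,0,0,p; 0,b,q,0; 0,r,c,0; s,0,0,d] : Matrix (Fin 4) (Fin 4) ℂ).charpoly
      = ((X^2 - C (a+d) * X + C (a*d - p*s)) * (X^2 - C (b+c) * X + C (b*c - q*r))) := by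
  have hc : charmatrix (!![a,0,0,p; 0,b,q,0; 0,r,c,0; s,0,0,d] : Matrix (Fin 4) (Fin 4) ℂ)
      = !![X - C a, 0, 0, -C p; 0, X - C b, -C q, 0; 0, -C r, X - C c, 0;
           -C s, 0, 0, X - C d] := by
    ext i j
    fin_cases i <;> fin_cases j <;>
      simp [charmatrix_apply, Matrix.one_apply]
  rw [Matrix.charpoly, hc]
  rw [Matrix.det_succ_row_zero]
  simp [Fin.sum_univ_succ, Matrix.det_fin_three, Fin.succAbove]
  ring

lemma quadFactor (u v t : ℝ) :
    (X - C ((((u+v)/2 + Real.sqrt ((u-v)^2/4 + t^2) : ℝ)) : ℂ)) *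
    (X - C ((((u+v)/2 - Real.sqrt ((u-v)^2/4 + t^2) : ℝ)) : ℂ))
      = X^2 - C (((u+v : ℝ)) : ℂ) * X + C (((u*v - t^2 : ℝ)) : ℂ) := by
  set r := Real.sqrt ((u-v)^2/4 + t^2) with hr
  have hD : (0:ℝ) ≤ (u-v)^2/4 + t^2 := by positivity
  have h2 : ((u+v)/2 + r) * ((u+v)/2 - r) = u*v - t^2 := by
    have := Real.sq_sqrt hD
    rw [← hr] at this
    nlinarith [this]
  have h1 : ((u+v)/2 + r) + ((u+v)/2 - r) = u+v := by ring
  have key : ∀ α β : ℂ, (X - C α) * (X - C β) = X^2 - C (α+β) * X + C (α*β) := by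
    intro α β; rw [C_add, C_mul]; ring
  rw [key, ← Complex.ofReal_add, ← Complex.ofReal_mul, h1, h2]

set_option maxHeartbeats 2000000 in
theorem stmt9 (ρ : Matrix (Fin 4) (Fin 4) ℂ)
    (hPSD : ρ.PosSemidef) (htr : ρ.trace = 1)
    (hXform : ρ 0 1 = 0 ∧ ρ 0 2 = 0 ∧ ρ 1 0 = 0 ∧ ρ 1 3 = 0 ∧
              ρ 2 0 = 0 ∧ ρ 2 3 = 0 ∧ ρ 3 1 = 0 ∧ ρ 3 2 = 0)
    (lam : Fin 4 → ℝ)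
    (heig : (ptA ρ).charpoly = ∏ i : Fin 4, (X - Polynomial.C ((lam i : ℂ)))) :
    (Finset.univ.filter (fun i => lam i < 0)).card ≤ 1 ∧
    ((∑ i : Fin 4, |lam i|) - 1) / 2 =
      -(min 0 (min
        (((ρ 1 1).re + (ρ 2 2).re) / 2 -
          Real.sqrt (((ρ 1 1).re - (ρ 2 2).re)^2 / 4 + ‖ρ 0 3‖^2))
        (((ρ 0 0).re + (ρ 3 3).re) / 2 -
          Real.sqrt (((ρ 0 0).re - (ρ 3 3).re)^2 / 4 + ‖ρ 1 2‖^2)))) := by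
  obtain ⟨h01, h02, h10, h13, h20, h23, h31, h32⟩ := hXform
  have herm := hPSD.1
  set a := (ρ 0 0).re with ha_def
  set b := (ρ 1 1).re with hb_def
  set c := (ρ 2 2).re with hc_def
  set d := (ρ 3 3).re with hd_def
  set p := ‖ρ 0 3‖ with hp_def
  set q := ‖ρ 1 2‖ with hq_def
  -- diagonal entries are real
  have e00 : ρ 0 0 = (a : ℂ) := (herm.coe_re_apply_self 0).symm
  have e11 : ρ 1 1 = (b : ℂ) := (herm.coe_re_apply_self 1).symm
  have e22 : ρ 2 2 = (c : ℂ) := (herm.coe_re_apply_self 2).symm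
  have e33 : ρ 3 3 = (d : ℂ) := (herm.coe_re_apply_self 3).symm
  -- off-diagonal products
  have e21 : ρ 2 1 * ρ 1 2 = ((q^2 : ℝ) : ℂ) := by
    rw [← herm.apply 2 1]
    rw [show star (ρ 1 2) * ρ 1 2 = ρ 1 2 * star (ρ 1 2) from mul_comm _ _]
    rw [show (star (ρ 1 2) : ℂ) = starRingEnd ℂ (ρ 1 2) from rfl, Complex.mul_conj]
    rw [Complex.normSq_eq_norm_sq]
  have e30 : ρ 3 0 * ρ 0 3 = ((p^2 : ℝ) : ℂ) := by
    rw [← herm.apply 3 0]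
    rw [show star (ρ 0 3) * ρ 0 3 = ρ 0 3 * star (ρ 0 3) from mul_comm _ _]
    rw [show (star (ρ 0 3) : ℂ) = starRingEnd ℂ (ρ 0 3) from rfl, Complex.mul_conj]
    rw [Complex.normSq_eq_norm_sq]
  -- ptA as explicit sparse matrix
  have hM : ptA ρ = !![(a:ℂ),0,0,ρ 2 1; 0,(b:ℂ),ρ 3 0,0; 0,ρ 0 3,(c:ℂ),0;
                       ρ 1 2,0,0,(d:ℂ)] := by
    ext i j
    fin_cases i <;> fin_cases j <;>
      simp [ptA, h01, h02, h10, h13, h20, h23, h31, h32, e00, e11, e22, e33]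
  -- the four eigenvalues
  set μp := (a+d)/2 + Real.sqrt ((a-d)^2/4 + q^2) with hμp_def
  set μm := (a+d)/2 - Real.sqrt ((a-d)^2/4 + q^2) with hμm_def
  set νp := (b+c)/2 + Real.sqrt ((b-c)^2/4 + p^2) with hνp_def
  set νm := (b+c)/2 - Real.sqrt ((b-c)^2/4 + p^2) with hνm_def
  have hfac : (ptA ρ).charpoly =
      (X - C ((μp:ℝ):ℂ)) * (X - C ((μm:ℝ):ℂ)) * ((X - C ((νp:ℝ):ℂ)) * (X - C ((νm:ℝ):ℂ))) := by
    rw [hM, charpoly4, quadFactor a d q, quadFactor b c p, e21, e30]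
    push_cast
    ring
  -- multiset of eigenvalues
  have hmsC : (Finset.univ.val.map fun i => ((lam i : ℂ))) =
      ({((μp:ℝ):ℂ), ((μm:ℝ):ℂ), ((νp:ℝ):ℂ), ((νm:ℝ):ℂ)} : Multiset ℂ) := by
    have h1 : ((Finset.univ.val.map fun i => ((lam i : ℂ))).map fun z => X - C z).prod
        = (({((μp:ℝ):ℂ), ((μm:ℝ):ℂ), ((νp:ℝ):ℂ), ((νm:ℝ):ℂ)} : Multiset ℂ).map
            fun z => X - C z).prod := by
      rw [Multiset.map_map]
      simp only [Function.comp_def]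
      rw [← Finset.prod_eq_multiset_prod, ← heig, hfac]
      simp only [Multiset.insert_eq_cons, Multiset.map_cons, Multiset.map_singleton,
        Multiset.prod_cons, Multiset.prod_singleton]
      ring
    have h2 := congrArg Polynomial.roots h1
    rwa [Polynomial.roots_multiset_prod_X_sub_C, Polynomial.roots_multiset_prod_X_sub_C] at h2
  have hlam : Finset.univ.val.map lam = ({μp, μm, νp, νm} : Multiset ℝ) := by
    apply Multiset.map_injective Complex.ofReal_injective
    rw [Multiset.map_map]
    simp only [Function.comp_def]
    rw [hmsC]
    simp [Multiset.insert_eq_cons]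
  -- PSD facts
  have ha : 0 ≤ a := psd_diag_re_nonneg ρ hPSD 0
  have hb : 0 ≤ b := psd_diag_re_nonneg ρ hPSD 1
  have hc : 0 ≤ c := psd_diag_re_nonneg ρ hPSD 2
  have hd : 0 ≤ d := psd_diag_re_nonneg ρ hPSD 3
  have hp2 : p^2 ≤ a*d := by
    have := minor2 (ρ.submatrix ![0,3] ![0,3]) (hPSD.submatrix _)
    simpa [Matrix.submatrix_apply] using this
  have hq2 : q^2 ≤ b*c := by
    have := minor2 (ρ.submatrix ![1,2] ![1,2]) (hPSD.submatrix _)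
    simpa [Matrix.submatrix_apply] using this
  -- trace
  have habcd : a + b + c + d = 1 := by
    have h1 : ρ.trace = ρ 0 0 + ρ 1 1 + ρ 2 2 + ρ 3 3 := by
      simp [Matrix.trace, Matrix.diag, Fin.sum_univ_four]
    rw [htr, e00, e11, e22, e33] at h1
    have := congrArg Complex.re h1
    simpa using this.symm
  -- sum of eigenvalues
  have hsum : μp + μm + νp + νm = 1 := by
    rw [hμp_def, hμm_def, hνp_def, hνm_def]; linarith [habcd]
  -- positivity facts
  have hμp0 : 0 ≤ μp := by
    rw [hμp_def]; have := Real.sqrt_nonneg ((a-d)^2/4 + q^2); linarith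
  have hνp0 : 0 ≤ νp := by
    rw [hνp_def]; have := Real.sqrt_nonneg ((b-c)^2/4 + p^2); linarith
  have hμm_iff : μm < 0 ↔ a*d < q^2 := by
    rw [hμm_def]
    rw [show (a+d)/2 - Real.sqrt ((a-d)^2/4 + q^2) < 0 ↔
        (a+d)/2 < Real.sqrt ((a-d)^2/4 + q^2) from by constructor <;> intro <;> linarith]
    rw [Real.lt_sqrt (by linarith)]
    constructor <;> intro <;> nlinarith
  have hνm_iff : νm < 0 ↔ b*c < p^2 := by
    rw [hνm_def]
    rw [show (b+c)/2 - Real.sqrt ((b-c)^2/4 + p^2) < 0 ↔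
        (b+c)/2 < Real.sqrt ((b-c)^2/4 + p^2) from by constructor <;> intro <;> linarith]
    rw [Real.lt_sqrt (by linarith)]
    constructor <;> intro <;> nlinarith
  have hnot : ¬(μm < 0 ∧ νm < 0) := by
    rintro ⟨h1, h2⟩
    rw [hμm_iff] at h1
    rw [hνm_iff] at h2
    linarith
  constructor
  · -- count of negatives
    have e1 : (Finset.univ.filter (fun i => lam i < 0)).card
        = Multiset.countP (fun x => x < 0) (Finset.univ.val.map lam) := by
      rw [Multiset.countP_map]
      rfl
    have hsing : Multiset.countP (fun x : ℝ => x < 0) {νm} = if νm < 0 then 1 else 0 := by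
      rw [Multiset.countP_eq_card_filter, Multiset.filter_singleton]
      split_ifs <;> simp
    rw [e1, hlam]
    simp only [Multiset.insert_eq_cons, Multiset.countP_cons, Multiset.countP_zero]
    by_cases h1 : μm < 0 <;> by_cases h2 : νm < 0
    · exact absurd ⟨h1, h2⟩ hnot
    all_goals simp [h1, h2, not_lt.mpr hμp0, not_lt.mpr hνp0, hsing, Multiset.countP_cons]
  · -- the sum formula
    have e2 : ∑ i : Fin 4, |lam i| = |μp| + |μm| + |νp| + |νm| := by
      rw [Finset.sum_eq_multiset_sum]
      rw [show (fun i => |lam i|) = (_root_.abs ∘ lam) from rfl, ← Multiset.map_map, hlam]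
      simp [Multiset.insert_eq_cons]
      ring
    rw [e2]
    by_cases h1 : μm < 0 <;> by_cases h2 : νm < 0
    · exact absurd ⟨h1, h2⟩ hnot
    · -- μm < 0 ≤ νm
      rw [_root_.abs_of_nonneg hμp0, _root_.abs_of_neg h1, _root_.abs_of_nonneg hνp0,
        _root_.abs_of_nonneg (not_lt.mp h2)]
      rw [min_eq_right (le_trans h1.le (not_lt.mp h2)), min_eq_right h1.le]
      linarith
    · -- νm < 0 ≤ μm
      rw [_root_.abs_of_nonneg hμp0, _root_.abs_of_nonneg (not_lt.mp h1), _root_.abs_of_nonneg hνp0,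
        _root_.abs_of_neg h2]
      rw [min_eq_left (le_trans h2.le (not_lt.mp h1)), min_eq_right h2.le]
      linarith
    · -- all nonneg
      rw [_root_.abs_of_nonneg hμp0, _root_.abs_of_nonneg (not_lt.mp h1), _root_.abs_of_nonneg hνp0,
        _root_.abs_of_nonneg (not_lt.mp h2)]
      rw [min_eq_left (le_min (not_lt.mp h2) (not_lt.mp h1))]
      linarith
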